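/- For p ∈ S and v ∈ T_pS set η'_p(v) = p₂·v₁ − p₁·v₂, η''_p(v) = w₂(p)·(Dw₁(p)v) − w₁(p)·(Dw₂(p)v), and θ_p(v) = −w₁(p)·v₁ − w₂(p)·v₂. Then for every p ∈ S and all v, v' ∈ T_pS: (a) −2·(v₁·v'₂ − v'₁·v₂) = 2·(η'_p(v)·θ_p(v') − η'_p(v')·θ_p(v)); (b) −2·[(Dw₁(p)v)·(Dw₂(p)v') − (Dw₁(p)v')·(Dw₂(p)v)] = −2·(η''_p(v)·θ_p(v') − η''_p(v')·θ_p(v)); (c) Σ_{m=1}^{2} [v_m·(Dw_m(p)v') − v'_m·(Dw_m(p)v)] = η'_p(v)·η''_p(v') − η'_p(v')·η''_p(v). (These are the structure equations dη' = 2·η'∧θ, dη'' = −2·η''∧θ, and dθ = η'∧η'' as 2-forms on S.) -/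

import Mathlib

open Complex

/-- Wirtinger derivative ∂F/∂z_j at p. -/
noncomputable def wirtZ {n : ℕ} (F : (Fin n → ℂ) → ℂ) (p : Fin n → ℂ) (j : Fin n) : ℂ :=
  (1/2) * (fderiv ℝ F p (Pi.single j 1) - I * fderiv ℝ F p (Pi.single j I))

/-- Wirtinger derivative ∂F/∂z̄_j at p. -/
noncomputable def wirtZbar {n : ℕ} (F : (Fin n → ℂ) → ℂ) (p : Fin n → ℂ) (j : Fin n) : ℂ :=
  (1/2) * (fderiv ℝ F p (Pi.single j 1) + I * fderiv ℝ F p (Pi.single j I))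

/-- The projective dual coordinates w_j(z) = (∂ρ/∂z_j)/(Σ_k z_k ∂ρ/∂z_k). -/
noncomputable def wC {n : ℕ} (ρ : (Fin n → ℂ) → ℝ) (z : Fin n → ℂ) (j : Fin n) : ℂ :=
  wirtZ (fun q => (ρ q : ℂ)) z j / ∑ k, z k * wirtZ (fun q => (ρ q : ℂ)) z k

/-- η'_p(v) = p₂·v₁ − p₁·v₂. -/
noncomputable def etaP (p v : Fin 2 → ℂ) : ℂ := p 1 * v 0 - p 0 * v 1

/-- η''_p(v) = w₂(p)·(Dw₁(p)v) − w₁(p)·(Dw₂(p)v). -/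
noncomputable def etaPP (ρ : (Fin 2 → ℂ) → ℝ) (p v : Fin 2 → ℂ) : ℂ :=
  wC ρ p 1 * fderiv ℝ (fun q => wC ρ q 0) p v - wC ρ p 0 * fderiv ℝ (fun q => wC ρ q 1) p v

/-- θ_p(v) = −w₁(p)·v₁ − w₂(p)·v₂. -/
noncomputable def thetaF (ρ : (Fin 2 → ℂ) → ℝ) (p v : Fin 2 → ℂ) : ℂ :=
  -(wC ρ p 0) * v 0 - wC ρ p 1 * v 1

/-!
On the open set where `∑ k, z k * ∂ρ/∂z_k` does not vanish, the functions `w_k` satisfy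
`∑ k, z k * w_k z = 1` identically. At `p ∈ S` this gives `p₁ w₁ + p₂ w₂ = 1`, and differentiating
it in a direction `u` gives `u₁ w₁ + u₂ w₂ + p₁ Dw₁ u + p₂ Dw₂ u = 0`. Each of the three structure
equations is a polynomial combination of these three relations (the second taken at `u = v` and
`u = v'`).
-/

open Topology

section Wirtinger

variable {n : ℕ}

theorem differentiable_wirtZ {F : (Fin n → ℂ) → ℂ} (hF : ContDiff ℝ 2 F) (j : Fin n) :
    Differentiable ℝ (fun z => wirtZ F z j) := by
  have hDF : Differentiable ℝ (fderiv ℝ F) :=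
    (hF.fderiv_right (m := 1) le_rfl).differentiable one_ne_zero
  unfold wirtZ
  fun_prop

theorem differentiable_wirtZ_ofReal {ρ : (Fin n → ℂ) → ℝ} (hρ : ContDiff ℝ 2 ρ) (j : Fin n) :
    Differentiable ℝ (fun z => wirtZ (fun q => (ρ q : ℂ)) z j) :=
  differentiable_wirtZ (ofRealCLM.contDiff.comp hρ) j

theorem sum_mul_wC_eq_one {ρ : (Fin n → ℂ) → ℝ} {z : Fin n → ℂ}
    (hz : ∑ k, z k * wirtZ (fun q => (ρ q : ℂ)) z k ≠ 0) :
    ∑ k, z k * wC ρ z k = 1 := by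
  simp only [wC, mul_div_assoc', ← Finset.sum_div, div_self hz]

variable {ρ : (Fin n → ℂ) → ℝ} {p : Fin n → ℂ}

theorem differentiable_sum_mul_wirtZ (hρ : ContDiff ℝ 2 ρ) :
    Differentiable ℝ fun z : Fin n → ℂ => ∑ k, z k * wirtZ (fun q => (ρ q : ℂ)) z k :=
  Differentiable.fun_sum fun k _ =>
    (differentiable_apply k).mul (differentiable_wirtZ_ofReal hρ k)

theorem differentiableAt_wC (hρ : ContDiff ℝ 2 ρ)
    (hp : ∑ k, p k * wirtZ (fun q => (ρ q : ℂ)) p k ≠ 0) (j : Fin n) :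
    DifferentiableAt ℝ (fun z => wC ρ z j) p := by
  simpa only [wC, div_eq_mul_inv] using
    (differentiable_wirtZ_ofReal hρ j p).fun_mul ((differentiable_sum_mul_wirtZ hρ p).fun_inv hp)

theorem sum_mul_wC_eventuallyEq_one (hρ : ContDiff ℝ 2 ρ)
    (hp : ∑ k, p k * wirtZ (fun q => (ρ q : ℂ)) p k ≠ 0) :
    (fun z => ∑ k, z k * wC ρ z k) =ᶠ[𝓝 p] fun _ => 1 := by
  filter_upwards [(differentiable_sum_mul_wirtZ hρ).continuous.continuousAt.eventually_ne hp]
    with z hz using sum_mul_wC_eq_one hz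

theorem sum_apply_mul_wC_add_mul_fderiv_wC_eq_zero (hρ : ContDiff ℝ 2 ρ)
    (hp : ∑ k, p k * wirtZ (fun q => (ρ q : ℂ)) p k ≠ 0) (u : Fin n → ℂ) :
    ∑ k, (u k * wC ρ p k + p k * fderiv ℝ (fun q => wC ρ q k) p u) = 0 := by
  have hderiv : HasFDerivAt (fun z => ∑ k, z k * wC ρ z k)
      (∑ k, (p k • fderiv ℝ (fun q => wC ρ q k) p + wC ρ p k • ContinuousLinearMap.proj k)) p :=
    HasFDerivAt.fun_sum fun k _ =>
      (hasFDerivAt_apply k p).mul (differentiableAt_wC hρ hp k).hasFDerivAt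
  have hzero := hderiv.unique ((hasFDerivAt_const 1 p).congr_of_eventuallyEq
    (sum_mul_wC_eventuallyEq_one hρ hp))
  simpa [add_comm, mul_comm] using congrArg (fun L => L u) hzero

end Wirtinger

theorem structure_equations_general
    (ρ : (Fin 2 → ℂ) → ℝ) (hρ : ContDiff ℝ (⊤ : ℕ∞) ρ)
    (S : Set (Fin 2 → ℂ))
    (hsum : ∀ p ∈ S, (∑ k, p k * wirtZ (fun q => (ρ q : ℂ)) p k) ≠ 0) :
    ∀ p ∈ S, ∀ v v' : Fin 2 → ℂ, fderiv ℝ ρ p v = 0 → fderiv ℝ ρ p v' = 0 →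
      (-2 * (v 0 * v' 1 - v' 0 * v 1)
          = 2 * (etaP p v * thetaF ρ p v' - etaP p v' * thetaF ρ p v)) ∧
      (-2 * (fderiv ℝ (fun q => wC ρ q 0) p v * fderiv ℝ (fun q => wC ρ q 1) p v'
              - fderiv ℝ (fun q => wC ρ q 0) p v' * fderiv ℝ (fun q => wC ρ q 1) p v)
          = -2 * (etaPP ρ p v * thetaF ρ p v' - etaPP ρ p v' * thetaF ρ p v)) ∧
      ((∑ m, (v m * fderiv ℝ (fun q => wC ρ q m) p v' - v' m * fderiv ℝ (fun q => wC ρ q m) p v))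
          = etaP p v * etaPP ρ p v' - etaP p v' * etaPP ρ p v) := by
  intro p hp v v' _ _
  have hρ2 : ContDiff ℝ 2 ρ := hρ.of_le ENat.LEInfty.out
  have hw := sum_mul_wC_eq_one (hsum p hp)
  have hdw := sum_apply_mul_wC_add_mul_fderiv_wC_eq_zero hρ2 (hsum p hp) v
  have hdw' := sum_apply_mul_wC_add_mul_fderiv_wC_eq_zero hρ2 (hsum p hp) v'
  simp only [Fin.sum_univ_two] at hw hdw hdw' ⊢
  set w₀ := wC ρ p 0
  set w₁ := wC ρ p 1
  set a := fderiv ℝ (fun q => wC ρ q 0) p v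
  set b := fderiv ℝ (fun q => wC ρ q 1) p v
  set a' := fderiv ℝ (fun q => wC ρ q 0) p v'
  set b' := fderiv ℝ (fun q => wC ρ q 1) p v'
  refine ⟨?_, ?_, ?_⟩ <;> simp only [etaP, etaPP, thetaF]
  · linear_combination 2 * (v 0 * v' 1 - v' 0 * v 1) * hw
  · linear_combination 2 * (w₁ * a' - w₀ * b') * hdw - 2 * (w₁ * a - w₀ * b) * hdw'
      + 2 * (a * b' - a' * b) * hw
  · linear_combination -(v 0 * a' - v' 0 * a + v 1 * b' - v' 1 * b) * hw
      + (w₀ * v 0 + w₁ * v 1) * hdw' - (w₀ * v' 0 + w₁ * v' 1) * hdw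

theorem structure_equations
    (ρ : (Fin 2 → ℂ) → ℝ) (hρ : ContDiff ℝ (⊤ : ℕ∞) ρ)
    (S : Set (Fin 2 → ℂ)) (hSdef : S = ρ ⁻¹' {0}) (hSne : S.Nonempty)
    (hDρ : ∀ p ∈ S, fderiv ℝ ρ p ≠ 0)
    (hsum : ∀ p ∈ S, (∑ k, p k * wirtZ (fun q => (ρ q : ℂ)) p k) ≠ 0) :
    ∀ p ∈ S, ∀ v v' : Fin 2 → ℂ, fderiv ℝ ρ p v = 0 → fderiv ℝ ρ p v' = 0 →
      (-2 * (v 0 * v' 1 - v' 0 * v 1)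
          = 2 * (etaP p v * thetaF ρ p v' - etaP p v' * thetaF ρ p v)) ∧
      (-2 * (fderiv ℝ (fun q => wC ρ q 0) p v * fderiv ℝ (fun q => wC ρ q 1) p v'
              - fderiv ℝ (fun q => wC ρ q 0) p v' * fderiv ℝ (fun q => wC ρ q 1) p v)
          = -2 * (etaPP ρ p v * thetaF ρ p v' - etaPP ρ p v' * thetaF ρ p v)) ∧
      ((∑ m, (v m * fderiv ℝ (fun q => wC ρ q m) p v' - v' m * fderiv ℝ (fun q => wC ρ q m) p v))
          = etaP p v * etaPP ρ p v' - etaP p v' * etaPP ρ p v) :=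
  structure_equations_general ρ hρ S hsum
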